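/- arXiv:0905.3327 — 6 statements merged into one kernel-verified Lean document; each statement's English description precedes it below -/
import Mathlib

section
/- For any odd prime p and any integers a, b > 0, the congruence H(−a, −b; p−1) ≡ −(1 − 1/2^{a+b−1})·H(a, b; p−1) − ((−1)^b / 2^{a+b−1})·H(a; (p−1)/2)·H(b; (p−1)/2) (mod p) holds. -/
/-!
Everything reduces to an identity in `ZMod p`, `p = 2m + 1`, where `k ↦ p - k` is negation.
Adding `H(-a,-b;2m)` and `H(a,b;2m)` keeps exactly the pairs `j < k` of equal parity; the even
ones are `(2j, 2k)` and the odd ones `(p - 2k, p - 2j)` with `j < k ≤ m`, so the sum is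
`2^{1-a-b} (H(a,b;m) + (-1)^{a+b} H(b,a;m))`. Splitting `H(a,b;2m)` at `m` and reflecting the
upper half gives `H(a,b;2m) = H(a,b;m) + (-1)^b H(a;m) H(b;m) + (-1)^{a+b} H(b,a;m)`, and
eliminating the two half sums yields the congruence.
-/

open Finset

/-- Auxiliary sum for alternating multiple harmonic sums: the indices attached to the
list entries range (strictly increasingly) in the interval `[m, n]`. -/
def Haux : List ℤ → ℕ → ℕ → ℚ
  | [], _, _ => 1
  | a :: as, m, n =>
      ∑ k ∈ Finset.Icc m n, ((Int.sign a : ℚ) ^ k / (k : ℚ) ^ a.natAbs) * Haux as (k + 1) n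

/-- The alternating multiple harmonic sum
`H(a₁,…,a_r; n) = ∑_{1 ≤ k₁ < ⋯ < k_r ≤ n} ∏ᵢ sign(aᵢ)^{kᵢ} / kᵢ^{|aᵢ|}`. -/
def H (as : List ℤ) (n : ℕ) : ℚ := Haux as 1 n

/-- `x ≡ y (mod p^k)` for rationals: the `p`-adic valuation of `x - y` is at least `k`,
expressed via the `p`-adic norm. -/
def Rcong (p k : ℕ) (x y : ℚ) : Prop := padicNorm p (x - y) ≤ (p : ℚ) ^ (-(k : ℤ))

/-- The Fermat quotient `q_p(2) = (2^(p-1) - 1)/p` as a rational number. -/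
def fq (p : ℕ) : ℚ := (2 ^ (p - 1) - 1 : ℚ) / p

def strictPairs (n : ℕ) : Finset (ℕ × ℕ) := {x ∈ Icc 1 n ×ˢ Icc 1 n | x.1 < x.2}

@[simp]
theorem mem_strictPairs {n : ℕ} {x : ℕ × ℕ} :
    x ∈ strictPairs n ↔ 1 ≤ x.1 ∧ x.1 < x.2 ∧ x.2 ≤ n := by
  simp only [strictPairs, mem_filter, mem_product, mem_Icc]
  omega

section Combinatorics

variable {M : Type*} [AddCommMonoid M]

theorem sum_strictPairs (f : ℕ → ℕ → M) (n : ℕ) :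
    ∑ x ∈ strictPairs n, f x.1 x.2 = ∑ j ∈ Icc 1 n, ∑ k ∈ Icc (j + 1) n, f j k :=
  sum_finset_product _ _ _ fun x => by simp only [mem_strictPairs, mem_Icc]; omega

theorem sum_strictPairs_two_mul (f : ℕ → ℕ → M) (m : ℕ) :
    ∑ x ∈ strictPairs (2 * m), f x.1 x.2 =
      ∑ x ∈ strictPairs m, f x.1 x.2 + ∑ x ∈ Icc 1 m ×ˢ Icc 1 m, f x.1 (2 * m + 1 - x.2) +
        ∑ x ∈ strictPairs m, f (2 * m + 1 - x.2) (2 * m + 1 - x.1) := by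
  rw [← sum_filter_add_sum_filter_not _ fun x => x.2 ≤ m,
    ← sum_filter_add_sum_filter_not {x ∈ strictPairs (2 * m) | ¬x.2 ≤ m} fun x => x.1 ≤ m,
    filter_filter, filter_filter, ← add_assoc]
  congr 1
  congr 1
  · congr 1
    ext x
    simp only [mem_filter, mem_strictPairs]
    omega
  · refine sum_nbij' (fun x => (x.1, 2 * m + 1 - x.2)) (fun x => (x.1, 2 * m + 1 - x.2))
      ?_ ?_ ?_ ?_ ?_ <;>
    simp only [mem_filter, mem_strictPairs, mem_product, mem_Icc, Prod.ext_iff, true_and] <;>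
    intro x hx
    all_goals first | omega | (congr 1; omega)
  · refine sum_nbij' (fun x => (2 * m + 1 - x.2, 2 * m + 1 - x.1))
      (fun x => (2 * m + 1 - x.2, 2 * m + 1 - x.1)) ?_ ?_ ?_ ?_ ?_ <;>
    simp only [mem_filter, mem_strictPairs, Prod.ext_iff] <;>
    intro x hx
    all_goals first | omega | congr 1 <;> omega

theorem sum_strictPairs_two_mul_filter_parity (f : ℕ → ℕ → M) (m : ℕ) :
    ∑ x ∈ strictPairs (2 * m) with x.1 % 2 = x.2 % 2, f x.1 x.2 =
      ∑ x ∈ strictPairs m, f (2 * x.1) (2 * x.2) +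
        ∑ x ∈ strictPairs m, f (2 * m + 1 - 2 * x.2) (2 * m + 1 - 2 * x.1) := by
  rw [← sum_filter_add_sum_filter_not _ fun x => x.2 % 2 = 0, filter_filter, filter_filter]
  congr 1
  · refine sum_nbij' (fun x => (x.1 / 2, x.2 / 2)) (fun x => (2 * x.1, 2 * x.2))
      ?_ ?_ ?_ ?_ ?_ <;>
    simp only [mem_filter, mem_strictPairs, Prod.ext_iff] <;>
    intro x hx
    all_goals first | omega | congr 1 <;> omega
  · refine sum_nbij' (fun x => ((2 * m + 1 - x.2) / 2, (2 * m + 1 - x.1) / 2))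
      (fun x => (2 * m + 1 - 2 * x.2, 2 * m + 1 - 2 * x.1)) ?_ ?_ ?_ ?_ ?_ <;>
    simp only [mem_filter, mem_strictPairs, Prod.ext_iff] <;>
    intro x hx
    all_goals first | omega | congr 1 <;> omega

end Combinatorics

section FieldIdentities

variable (K : Type*) [Field K]

def harmonicPow (e n : ℕ) : K := ∑ k ∈ Icc 1 n, (k : K)⁻¹ ^ e

def harmonicPair (ε : K) (a b n : ℕ) : K :=
  ∑ x ∈ strictPairs n, ε ^ x.1 * (x.1 : K)⁻¹ ^ a * (ε ^ x.2 * (x.2 : K)⁻¹ ^ b)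

variable {K} {m : ℕ}

theorem harmonicPair_one (a b n : ℕ) :
    harmonicPair K 1 a b n = ∑ x ∈ strictPairs n, (x.1 : K)⁻¹ ^ a * (x.2 : K)⁻¹ ^ b := by
  simp only [harmonicPair, one_pow, one_mul]

theorem natCast_sub_of_natCast_eq_zero {N k : ℕ} (hN : (N : K) = 0) (hk : k ≤ N) :
    ((N - k : ℕ) : K) = -k := by
  rw [Nat.cast_sub hk, hN, zero_sub]

theorem harmonicPair_one_two_mul (hK : ((2 * m + 1 : ℕ) : K) = 0) (a b : ℕ) :
    harmonicPair K 1 a b (2 * m) = harmonicPair K 1 a b m +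
      (-1) ^ b * (harmonicPow K a m * harmonicPow K b m) +
        (-1) ^ (a + b) * harmonicPair K 1 b a m := by
  have hmixed : ∑ x ∈ Icc 1 m ×ˢ Icc 1 m, (x.1 : K)⁻¹ ^ a * ((2 * m + 1 - x.2 : ℕ) : K)⁻¹ ^ b =
      (-1) ^ b * (harmonicPow K a m * harmonicPow K b m) := by
    rw [harmonicPow, harmonicPow, sum_mul_sum, ← sum_product', mul_sum]
    refine sum_congr rfl fun x hx => ?_
    simp only [mem_product, mem_Icc] at hx
    rw [natCast_sub_of_natCast_eq_zero hK (by omega), inv_neg, neg_pow]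
    ring
  have hhigh : ∑ x ∈ strictPairs m,
      ((2 * m + 1 - x.2 : ℕ) : K)⁻¹ ^ a * ((2 * m + 1 - x.1 : ℕ) : K)⁻¹ ^ b =
        (-1) ^ (a + b) * harmonicPair K 1 b a m := by
    rw [harmonicPair_one, mul_sum]
    refine sum_congr rfl fun x hx => ?_
    rw [mem_strictPairs] at hx
    rw [natCast_sub_of_natCast_eq_zero hK (by omega), natCast_sub_of_natCast_eq_zero hK (by omega), inv_neg, inv_neg, neg_pow,
      neg_pow (x.1 : K)⁻¹]
    ring
  rw [harmonicPair_one, harmonicPair_one,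
    sum_strictPairs_two_mul (fun j k => (j : K)⁻¹ ^ a * (k : K)⁻¹ ^ b), hmixed, hhigh]

theorem neg_one_pow_mul_neg_one_pow_add_one (j k : ℕ) :
    (-1 : K) ^ j * (-1) ^ k + 1 = if j % 2 = k % 2 then 2 else 0 := by
  rw [← pow_add]
  split_ifs with h
  · rw [Even.neg_one_pow (by rw [Nat.even_iff]; omega)]
    norm_num
  · rw [Odd.neg_one_pow (by rw [Nat.odd_iff]; omega)]
    norm_num

theorem harmonicPair_neg_one_add_one (hK : ((2 * m + 1 : ℕ) : K) = 0) (a b : ℕ) :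
    harmonicPair K (-1) a b (2 * m) + harmonicPair K 1 a b (2 * m) =
      2 * 2⁻¹ ^ (a + b) * (harmonicPair K 1 a b m + (-1) ^ (a + b) * harmonicPair K 1 b a m) := by
  have hsum : harmonicPair K (-1) a b (2 * m) + harmonicPair K 1 a b (2 * m) =
      2 * ∑ x ∈ strictPairs (2 * m) with x.1 % 2 = x.2 % 2, (x.1 : K)⁻¹ ^ a * (x.2 : K)⁻¹ ^ b := by
    rw [harmonicPair, harmonicPair, ← sum_add_distrib, sum_filter, mul_sum]
    refine sum_congr rfl fun x _ => ?_
    have := neg_one_pow_mul_neg_one_pow_add_one (K := K) x.1 x.2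
    split_ifs at this ⊢ <;> linear_combination ((x.1 : K)⁻¹ ^ a * (x.2 : K)⁻¹ ^ b) * this
  have heven : ∑ x ∈ strictPairs m, ((2 * x.1 : ℕ) : K)⁻¹ ^ a * ((2 * x.2 : ℕ) : K)⁻¹ ^ b =
      2⁻¹ ^ (a + b) * harmonicPair K 1 a b m := by
    rw [harmonicPair_one, mul_sum]
    refine sum_congr rfl fun x _ => ?_
    simp only [Nat.cast_mul, Nat.cast_ofNat, mul_inv, mul_pow, pow_add]
    ring
  have hodd : ∑ x ∈ strictPairs m,
      ((2 * m + 1 - 2 * x.2 : ℕ) : K)⁻¹ ^ a * ((2 * m + 1 - 2 * x.1 : ℕ) : K)⁻¹ ^ b =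
        2⁻¹ ^ (a + b) * ((-1) ^ (a + b) * harmonicPair K 1 b a m) := by
    rw [harmonicPair_one, mul_sum, mul_sum]
    refine sum_congr rfl fun x hx => ?_
    rw [mem_strictPairs] at hx
    rw [natCast_sub_of_natCast_eq_zero hK (by omega), natCast_sub_of_natCast_eq_zero hK (by omega), inv_neg, inv_neg, neg_pow,
      neg_pow ((2 * x.1 : ℕ) : K)⁻¹]
    simp only [Nat.cast_mul, Nat.cast_ofNat, mul_inv, mul_pow, pow_add]
    ring
  rw [hsum, sum_strictPairs_two_mul_filter_parity (fun j k => (j : K)⁻¹ ^ a * (k : K)⁻¹ ^ b),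
    heven, hodd]
  ring

theorem harmonicPair_neg_one (hK : ((2 * m + 1 : ℕ) : K) = 0) {a b : ℕ} (hab : a + b ≠ 0) :
    harmonicPair K (-1) a b (2 * m) = -(1 - 2⁻¹ ^ (a + b - 1)) * harmonicPair K 1 a b (2 * m) -
      (-1) ^ b * 2⁻¹ ^ (a + b - 1) * (harmonicPow K a m * harmonicPow K b m) := by
  have h2 : (2 : K) ≠ 0 := fun h => by simp [h] at hK
  have htwo : 2 * 2⁻¹ ^ (a + b) = (2⁻¹ ^ (a + b - 1) : K) := by
    obtain ⟨e, he⟩ : ∃ e, a + b = e + 1 := ⟨a + b - 1, by omega⟩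
    rw [he, Nat.add_sub_cancel, pow_succ, mul_left_comm, mul_inv_cancel₀ h2, mul_one]
  rw [← htwo]
  linear_combination harmonicPair_neg_one_add_one hK a b -
    2 * 2⁻¹ ^ (a + b) * harmonicPair_one_two_mul hK a b

end FieldIdentities

/-- The pairs `(q, c)` with `q` a `p`-integral rational reducing to `c` modulo `p`. Being a
subring, it turns reduction modulo `p` into a ring homomorphism on the sums involved. -/
noncomputable def reductionGraph (p : ℕ) [Fact p.Prime] : Subring (ℚ × ZMod p) :=
  (PadicInt.Coe.ringHom.prod PadicInt.toZMod).range.comap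
    ((Rat.castHom ℚ_[p]).prodMap (RingHom.id (ZMod p)))

section Reduction

variable {p : ℕ} [Fact p.Prime]

theorem mem_reductionGraph {q : ℚ} {c : ZMod p} :
    (q, c) ∈ reductionGraph p ↔ ∃ z : ℤ_[p], (z : ℚ_[p]) = q ∧ PadicInt.toZMod z = c := by
  simp only [reductionGraph, Subring.mem_comap, RingHom.mem_range, Prod.ext_iff]
  exact Iff.rfl

theorem inv_mem_reductionGraph {q : ℚ} {c : ZMod p} (h : (q, c) ∈ reductionGraph p)
    (hc : c ≠ 0) : (q⁻¹, c⁻¹) ∈ reductionGraph p := by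
  obtain ⟨z, hzq, rfl⟩ := mem_reductionGraph.mp h
  have hz : IsUnit z := by
    rw [← IsLocalRing.notMem_maximalIdeal, ← PadicInt.ker_toZMod]
    exact hc
  refine mem_reductionGraph.mpr
    ⟨↑hz.unit⁻¹, ?_, map_units_inv (PadicInt.toZMod (p := p)).toMonoidHom hz.unit⟩
  rw [Rat.cast_inv, ← hzq]
  exact map_units_inv (PadicInt.Coe.ringHom (p := p)).toMonoidHom hz.unit

theorem rcong_of_mem_reductionGraph {x y : ℚ} {c : ZMod p} (hx : (x, c) ∈ reductionGraph p)
    (hy : (y, c) ∈ reductionGraph p) : Rcong p 1 x y := by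
  have hxy := sub_mem hx hy
  rw [Prod.mk_sub_mk, sub_self] at hxy
  obtain ⟨z, hz, hz0⟩ := mem_reductionGraph.mp hxy
  have hmem : z ∈ Ideal.span {(p : ℤ_[p]) ^ 1} := by
    rw [pow_one, ← PadicInt.maximalIdeal_eq_span_p, ← PadicInt.ker_toZMod]
    exact hz0
  have := (PadicInt.norm_le_pow_iff_mem_span_pow z 1).mpr hmem
  rw [PadicInt.norm_def, hz, Padic.eq_padicNorm] at this
  rw [Rcong, ← Rat.cast_le (K := ℝ)]
  simpa using this

end Reduction

section Transfer

variable {p : ℕ} [Fact p.Prime]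

theorem sum_mem_reductionGraph {ι : Type*} {s : Finset ι} {f : ι → ℚ} {g : ι → ZMod p}
    (h : ∀ i ∈ s, (f i, g i) ∈ reductionGraph p) :
    (∑ i ∈ s, f i, ∑ i ∈ s, g i) ∈ reductionGraph p :=
  prod_mk_sum s f g ▸ sum_mem h

theorem inv_natCast_mem_reductionGraph {k : ℕ} (hk : ¬p ∣ k) :
    ((k : ℚ)⁻¹, (k : ZMod p)⁻¹) ∈ reductionGraph p :=
  inv_mem_reductionGraph (natCast_mem _ k) (by rwa [Ne, ZMod.natCast_eq_zero_iff])

theorem harmonicPow_mem_reductionGraph (e : ℕ) {n : ℕ} (hn : n < p) :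
    (harmonicPow ℚ e n, harmonicPow (ZMod p) e n) ∈ reductionGraph p :=
  sum_mem_reductionGraph fun k hk => by
    rw [mem_Icc] at hk
    exact pow_mem (inv_natCast_mem_reductionGraph (Nat.not_dvd_of_pos_of_lt hk.1 (by omega))) e

theorem harmonicPair_mem_reductionGraph {ε : ℚ} {ε' : ZMod p}
    (hε : (ε, ε') ∈ reductionGraph p) (a b : ℕ) {n : ℕ} (hn : n < p) :
    (harmonicPair ℚ ε a b n, harmonicPair (ZMod p) ε' a b n) ∈ reductionGraph p := by
  refine sum_mem_reductionGraph fun x hx => ?_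
  rw [mem_strictPairs] at hx
  have hx1 := inv_natCast_mem_reductionGraph (p := p) (k := x.1)
    (Nat.not_dvd_of_pos_of_lt (by omega) (by omega))
  have hx2 := inv_natCast_mem_reductionGraph (p := p) (k := x.2)
    (Nat.not_dvd_of_pos_of_lt (by omega) (by omega))
  exact mul_mem (mul_mem (pow_mem hε _) (pow_mem hx1 a)) (mul_mem (pow_mem hε _) (pow_mem hx2 b))

end Transfer

theorem H_singleton_natCast {e : ℕ} (he : 0 < e) (n : ℕ) : H [(e : ℤ)] n = harmonicPow ℚ e n := by
  simp [H, Haux, harmonicPow, Int.sign_natCast_of_ne_zero he.ne', div_eq_mul_inv, inv_pow]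

theorem H_pair (x y : ℤ) (n : ℕ) :
    H [x, y] n = ∑ z ∈ strictPairs n,
      (x.sign : ℚ) ^ z.1 / (z.1 : ℚ) ^ x.natAbs * ((y.sign : ℚ) ^ z.2 / (z.2 : ℚ) ^ y.natAbs) := by
  rw [sum_strictPairs (fun j k => (x.sign : ℚ) ^ j / (j : ℚ) ^ x.natAbs *
    ((y.sign : ℚ) ^ k / (k : ℚ) ^ y.natAbs))]
  simp [H, Haux, mul_sum]

theorem H_pair_natCast {a b : ℕ} (ha : 0 < a) (hb : 0 < b) (n : ℕ) :
    H [(a : ℤ), (b : ℤ)] n = harmonicPair ℚ 1 a b n := by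
  simp [H_pair, harmonicPair, Int.sign_natCast_of_ne_zero, ha.ne', hb.ne', div_eq_mul_inv, inv_pow]

theorem H_pair_neg_natCast {a b : ℕ} (ha : 0 < a) (hb : 0 < b) (n : ℕ) :
    H [-(a : ℤ), -(b : ℤ)] n = harmonicPair ℚ (-1) a b n := by
  simp [H_pair, harmonicPair, Int.sign_natCast_of_ne_zero, ha.ne', hb.ne', div_eq_mul_inv, inv_pow]

theorem stmt_3 (p : ℕ) (hp : p.Prime) (hp2 : p ≠ 2) (a b : ℕ) (ha : 0 < a) (hb : 0 < b) :
    Rcong p 1 (H [-(a : ℤ), -(b : ℤ)] (p - 1))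
      (-(1 - 1 / 2 ^ (a + b - 1)) * H [(a : ℤ), (b : ℤ)] (p - 1) -
        ((-1 : ℚ) ^ b / 2 ^ (a + b - 1)) *
          (H [(a : ℤ)] ((p - 1) / 2) * H [(b : ℤ)] ((p - 1) / 2))) := by
  have := Fact.mk hp
  obtain ⟨m, hm⟩ := hp.odd_of_ne_two hp2
  have hK : ((2 * m + 1 : ℕ) : ZMod p) = 0 := by rw [← hm, ZMod.natCast_self]
  have hhalf : ((2 : ℚ)⁻¹, (2 : ZMod p)⁻¹) ∈ reductionGraph p := by
    simpa using inv_natCast_mem_reductionGraph (p := p) (k := 2)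
      (fun h => hp2 ((Nat.prime_dvd_prime_iff_eq hp Nat.prime_two).mp h))
  have hsign : ((-1 : ℚ), (-1 : ZMod p)) ∈ reductionGraph p := neg_mem (one_mem _)
  rw [show p - 1 = 2 * m by omega, show 2 * m / 2 = m by omega, H_pair_neg_natCast ha hb,
    H_pair_natCast ha hb, H_singleton_natCast ha, H_singleton_natCast hb]
  refine rcong_of_mem_reductionGraph (harmonicPair_mem_reductionGraph hsign a b (by omega)) ?_
  rw [harmonicPair_neg_one hK (by omega), one_div, div_eq_mul_inv, ← inv_pow]
  exact sub_mem (mul_mem (neg_mem (sub_mem (one_mem _) (pow_mem hhalf _)))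
    (harmonicPair_mem_reductionGraph (one_mem _) a b (by omega)))
    (mul_mem (mul_mem (pow_mem hsign b) (pow_mem hhalf _))
      (mul_mem (harmonicPow_mem_reductionGraph a (by omega))
        (harmonicPow_mem_reductionGraph b (by omega))))
end

section
/- For any integer a > 1 and any prime p > a + 1, the congruence H(−a; p−1) ≡ −((2^a − 2)/(a·2^{a−1}))·B_{p−a} (mod p) holds. -/
open Finset

/-!
Fermat's little theorem turns `(-1)^k / k^a` into `(-1)^k k^m` with `m = p - 1 - a`.
Separating even and odd `k` gives
`∑_{k=1}^{p-1} (-1)^k k^m = 2^(m+1) ∑_{j ≤ (p-1)/2} j^m - ∑_{k < p} k^m`, and the last sum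
vanishes mod `p` because `m < p - 1`. In Faulhaber's formula for the first sum the powers of
`2 · (p+1)/2 = p + 1` are `≡ 1`, which leaves `∑_{i ≤ m} C(m+1, i) 2^i B_i / (m+1)`; the
generating-function identity `B(2x) (e^x + 1) = 2 B(x)` evaluates this to
`(2 - 2^(m+2)) B_{m+1} / (m+1)`. Finally `m + 1 ≡ -a` and `2^(m+2) · 2^(a-1) = 2^p ≡ 2`.
All Bernoulli numbers that occur have index at most `p - 2`, so they are `p`-integral by
von Staudt–Clausen.
-/

section Rcong

variable {p k : ℕ} [Fact p.Prime]

theorem Rcong.trans {x y z : ℚ} (hxy : Rcong p k x y) (hyz : Rcong p k y z) :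
    Rcong p k x z := by
  unfold Rcong at *
  calc padicNorm p (x - z) = padicNorm p ((x - y) + (y - z)) := by ring_nf
    _ ≤ _ := padicNorm.nonarchimedean.trans (max_le hxy hyz)

theorem Rcong.sub {x x' y y' : ℚ} (hx : Rcong p k x x') (hy : Rcong p k y y') :
    Rcong p k (x - y) (x' - y') := by
  unfold Rcong at *
  calc padicNorm p (x - y - (x' - y')) = padicNorm p ((x - x') - (y - y')) := by ring_nf
    _ ≤ _ := padicNorm.sub.trans (max_le hx hy)

theorem Rcong.sum {ι : Type*} {s : Finset ι} {f g : ι → ℚ}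
    (h : ∀ i ∈ s, Rcong p k (f i) (g i)) : Rcong p k (∑ i ∈ s, f i) (∑ i ∈ s, g i) := by
  unfold Rcong at *
  rw [← sum_sub_distrib]
  exact padicNorm.sum_le' h (by positivity)

theorem Rcong.mul_right {x y c : ℚ} (h : Rcong p k x y) (hc : padicNorm p c ≤ 1) :
    Rcong p k (x * c) (y * c) := by
  unfold Rcong at *
  rw [← sub_mul, padicNorm.mul]
  exact (mul_le_of_le_one_right (padicNorm.nonneg _) hc).trans h

theorem Rcong.div_of_mul {x y c d : ℚ} (hc : padicNorm p c = 1) (hd : padicNorm p d = 1)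
    (h : Rcong p k (x * d) (y * c)) : Rcong p k (x / c) (y / d) := by
  have hc0 : c ≠ 0 := by rintro rfl; simp at hc
  have hd0 : d ≠ 0 := by rintro rfl; simp at hd
  unfold Rcong at *
  rwa [div_sub_div _ _ hc0 hd0, padicNorm.div, padicNorm.mul, hc, hd, mul_one, div_one,
    mul_comm c]

theorem rcong_intCast_iff {x y : ℤ} : Rcong p k x y ↔ x ≡ y [ZMOD p ^ k] := by
  rw [Rcong, ← Int.cast_sub, ← padicNorm.dvd_iff_norm_le, Int.modEq_iff_dvd, dvd_sub_comm]
  push_cast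
  rfl

end Rcong

section Bernoulli

open PowerSeries
open scoped Nat

theorem rescale_two_bernoulliPowerSeries_mul_exp_add_one :
    rescale (2 : ℚ) (bernoulliPowerSeries ℚ) * (exp ℚ + 1) =
      C (2 : ℚ) * bernoulliPowerSeries ℚ := by
  have hexp : exp ℚ - 1 ≠ 0 := fun h => by
    simpa using congrArg (coeff 1) h
  have hsq : (exp ℚ + 1) * (exp ℚ - 1) = rescale (2 : ℚ) (exp ℚ) - 1 := by
    have := exp_mul_exp_eq_exp_add (1 : ℚ) 1
    rw [rescale_one, RingHom.id_apply, one_add_one_eq_two] at this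
    rw [← this]
    ring
  apply mul_right_cancel₀ hexp
  rw [mul_assoc, hsq, mul_assoc, bernoulliPowerSeries_mul_exp_sub_one,
    ← map_one (rescale (2 : ℚ)), ← map_sub, ← map_mul, bernoulliPowerSeries_mul_exp_sub_one,
    rescale_X]

theorem sum_range_choose_mul_two_pow_mul_bernoulli (n : ℕ) :
    ∑ i ∈ range (n + 1), (n.choose i : ℚ) * 2 ^ i * bernoulli i =
      (2 - 2 ^ n) * bernoulli n := by
  have h := congrArg (coeff n) rescale_two_bernoulliPowerSeries_mul_exp_add_one
  rw [mul_add, mul_one, map_add, coeff_C_mul, coeff_mul,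
    Nat.sum_antidiagonal_eq_sum_range_succ (fun i j => coeff i _ * coeff j (exp ℚ)) n] at h
  simp only [bernoulliPowerSeries, rescale_mk, coeff_mk, coeff_exp, Algebra.algebraMap_self,
    RingHom.id_apply, one_div] at h
  have hfac : (n ! : ℚ) ≠ 0 := by exact_mod_cast n.factorial_ne_zero
  have hterm : ∀ i ∈ range (n + 1), (n.choose i : ℚ) * 2 ^ i * bernoulli i
      = n ! * (2 ^ i * (bernoulli i / i !) * ((n - i)! : ℚ)⁻¹) := by
    intro i hi
    rw [Nat.cast_choose ℚ (Nat.lt_succ_iff.1 (mem_range.1 hi))]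
    field_simp
  rw [sum_congr rfl hterm, ← mul_sum, eq_sub_of_add_eq h]
  field_simp

end Bernoulli

theorem sum_Icc_neg_one_pow_mul_pow {m : ℕ} (hm : m ≠ 0) (n : ℕ) :
    ∑ k ∈ Icc 1 (2 * n), (-1 : ℚ) ^ k * (k : ℚ) ^ m
      = 2 ^ (m + 1) * ∑ j ∈ range (n + 1), (j : ℚ) ^ m
        - ∑ k ∈ range (2 * n + 1), (k : ℚ) ^ m := by
  induction n with
  | zero => simp [zero_pow hm]
  | succ n ih =>
    rw [show 2 * (n + 1) = 2 * n + 1 + 1 by ring, sum_Icc_succ_top (by omega),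
      sum_Icc_succ_top (by omega), ih, sum_range_succ _ (n + 1), sum_range_succ _ (2 * n + 1 + 1),
      sum_range_succ _ (2 * n + 1), (odd_two_mul_add_one n).neg_one_pow,
      Even.neg_one_pow ⟨n + 1, by ring⟩]
    push_cast
    rw [show 2 * (n : ℚ) + 1 + 1 = 2 * (n + 1) by ring, mul_pow]
    ring

theorem H_singleton_neg {a : ℕ} (ha : a ≠ 0) (n : ℕ) :
    H [-(a : ℤ)] n = ∑ k ∈ Icc 1 n, (-1 : ℚ) ^ k / (k : ℚ) ^ a := by
  simp [H, Haux, Int.sign_natCast_of_ne_zero ha]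

section Congruences

variable {p : ℕ} [hp : Fact p.Prime]

theorem padicNorm_natCast_eq_one {n : ℕ} (h0 : n ≠ 0) (hn : n < p) : padicNorm p n = 1 :=
  (padicNorm.nat_eq_one_iff n).2 fun h =>
    absurd (Nat.le_of_dvd (Nat.pos_of_ne_zero h0) h) (by omega)

theorem padicNorm_bernoulli_le_one {n : ℕ} (hn : n + 2 ≤ p) :
    padicNorm p (bernoulli n) ≤ 1 := by
  obtain ⟨k, rfl | rfl⟩ := n.even_or_odd'
  · obtain ⟨z, hz⟩ := Bernoulli.vonStaudt_clausen k
    rw [eq_sub_of_add_eq hz.symm]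
    refine padicNorm.sub.trans (max_le (padicNorm.of_int z) (padicNorm.sum_le' ?_ zero_le_one))
    intro q hq
    obtain ⟨hqk, hq, -⟩ := mem_filter.1 hq
    rw [padicNorm.div, padicNorm.one,
      padicNorm_natCast_eq_one hq.ne_zero (by have := mem_range.1 hqk; omega), div_one]
  · rcases k.eq_zero_or_pos with rfl | hk
    · rw [mul_zero, zero_add, bernoulli_one, padicNorm.div, padicNorm.neg, padicNorm.one]
      have h2 : padicNorm p (2 : ℕ) = 1 := padicNorm_natCast_eq_one two_ne_zero (by omega)
      rw [Nat.cast_ofNat] at h2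
      rw [h2, div_one]
    · simp [bernoulli_eq_zero_of_odd (odd_two_mul_add_one k) (by omega)]

theorem rcong_inv_pow_pow {n a m : ℕ} (hn : ¬ p ∣ n) (ham : a + m = p - 1) :
    Rcong p 1 ((n : ℚ) ^ a)⁻¹ ((n : ℚ) ^ m) := by
  have hn0 : (n : ℚ) ≠ 0 := by rintro h; exact hn (by simp [Nat.cast_eq_zero.1 h])
  have hnorm : padicNorm p ((n : ℚ) ^ a)⁻¹ ≤ 1 := by
    have : padicNorm p ((n ^ a : ℕ) : ℚ) = 1 :=
      (padicNorm.nat_eq_one_iff _).2 fun h => hn (hp.out.dvd_of_dvd_pow h)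
    rw [inv_eq_one_div, padicNorm.div, padicNorm.one, ← Nat.cast_pow, this, div_one]
  have hfermat : Rcong p 1 1 ((n : ℚ) ^ (p - 1)) := by
    have := Int.ModEq.pow_card_sub_one_eq_one hp.out (n := n)
      (Nat.isCoprime_iff_coprime.2 ((Nat.Prime.coprime_iff_not_dvd hp.out).2 hn).symm) |>.symm
    rw [← pow_one (p : ℤ), ← rcong_intCast_iff] at this
    exact_mod_cast this
  have := hfermat.mul_right hnorm
  rwa [one_mul, ← ham, pow_add, mul_comm, inv_mul_cancel_left₀ (pow_ne_zero a hn0)] at this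

theorem rcong_sum_neg_one_pow_div_pow {n a m : ℕ} (hn : n < p) (ham : a + m = p - 1) :
    Rcong p 1 (∑ k ∈ Icc 1 n, (-1 : ℚ) ^ k / (k : ℚ) ^ a)
      (∑ k ∈ Icc 1 n, (-1 : ℚ) ^ k * (k : ℚ) ^ m) := by
  refine Rcong.sum fun k hk => ?_
  obtain ⟨hk1, hkn⟩ := mem_Icc.1 hk
  have hsign : padicNorm p ((-1 : ℚ) ^ k) ≤ 1 := by exact_mod_cast padicNorm.of_int ((-1) ^ k)
  have := (rcong_inv_pow_pow (a := a) (m := m) (n := k)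
    (fun h => absurd (Nat.le_of_dvd hk1 h) (by omega)) ham).mul_right hsign
  rwa [mul_comm, ← div_eq_mul_inv, mul_comm] at this

theorem rcong_sum_range_pow_zero {m : ℕ} (hm : m < p - 1) :
    Rcong p 1 (∑ k ∈ range p, (k : ℚ) ^ m) 0 := by
  have hcast : ∑ k ∈ range p, (k : ℚ) ^ m =
      ((∑ k ∈ range p, (k : ℤ) ^ m : ℤ) : ℚ) := by
    push_cast; rfl
  rw [hcast, ← Int.cast_zero, rcong_intCast_iff, pow_one,
    ← ZMod.intCast_eq_intCast_iff]
  push_cast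
  have hbij : ∑ k ∈ range p, ((k : ZMod p)) ^ m = ∑ x : ZMod p, x ^ m := by
    refine sum_nbij' (fun k => (k : ZMod p)) ZMod.val (fun _ _ => mem_univ _)
      (fun x _ => mem_range.2 (ZMod.val_lt x)) (fun k hk => ZMod.val_cast_of_lt (mem_range.1 hk))
      (fun x _ => ZMod.natCast_zmod_val x) (fun _ _ => rfl)
  rw [hbij]
  exact FiniteField.sum_pow_lt_card_sub_one (K := ZMod p) m (by rwa [ZMod.card])

theorem rcong_two_pow_mul_sum_range_pow {m t : ℕ} (hpt : p = 2 * t + 1) (hm : m + 2 ≤ p) :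
    Rcong p 1 (2 ^ (m + 1) * ∑ j ∈ range (t + 1), (j : ℚ) ^ m)
      ((2 - 2 ^ (m + 2)) / (m + 1) * bernoulli (m + 1)) := by
  set c : ℕ → ℚ := fun i => (m + 1).choose i * 2 ^ i * bernoulli i / (m + 1) with hc
  have hsum : ∑ i ∈ range (m + 1), c i = (2 - 2 ^ (m + 2)) / (m + 1) * bernoulli (m + 1) := by
    have h := sum_range_choose_mul_two_pow_mul_bernoulli (m + 1)
    rw [sum_range_succ, Nat.choose_self, Nat.cast_one, one_mul] at h
    rw [hc, ← sum_div, eq_sub_of_add_eq h]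
    ring
  rw [sum_range_pow, mul_sum, ← hsum]
  refine Rcong.sum fun i hi => ?_
  have hi : i ≤ m := Nat.lt_succ_iff.1 (mem_range.1 hi)
  have hterm : 2 ^ (m + 1) * (bernoulli i * (m + 1).choose i * ((t + 1 : ℕ) : ℚ) ^ (m + 1 - i)
      / (m + 1)) = (p + 1 : ℚ) ^ (m + 1 - i) * c i := by
    have h2 : (2 : ℚ) ^ (m + 1) = 2 ^ i * 2 ^ (m + 1 - i) := by rw [← pow_add]; congr 1; omega
    have hp1 : (p + 1 : ℚ) = 2 * (t + 1 : ℕ) := by rw [hpt]; push_cast; ring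
    rw [hc, h2, hp1, mul_pow]
    ring
  have hcint : padicNorm p (c i) ≤ 1 := by
    have hden : padicNorm p ((m + 1 : ℕ) : ℚ) = 1 :=
      padicNorm_natCast_eq_one (by omega) (by omega)
    rw [hc]
    dsimp only
    rw [padicNorm.div, ← Nat.cast_succ, hden, div_one, padicNorm.mul, padicNorm.mul]
    refine mul_le_one₀ (mul_le_one₀ (padicNorm.of_nat _) (padicNorm.nonneg _) ?_)
      (padicNorm.nonneg _) (padicNorm_bernoulli_le_one (by omega))
    exact_mod_cast padicNorm.of_nat (2 ^ i)
  have hpow : Rcong p 1 ((p + 1 : ℚ) ^ (m + 1 - i)) 1 := by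
    have : ((p : ℤ) + 1) ^ (m + 1 - i) ≡ 1 [ZMOD p ^ 1] := by
      simpa using ((Int.modEq_zero_iff_dvd.2 (dvd_refl (p : ℤ))).add_right 1).pow (m + 1 - i)
    exact_mod_cast rcong_intCast_iff.2 this
  have := hpow.mul_right hcint
  rwa [one_mul, ← hterm] at this

theorem rcong_two_sub_two_pow_div {a m : ℕ} (ha : 0 < a) (hp2 : p ≠ 2) (hmap : m + 1 + a = p) :
    Rcong p 1 ((2 - 2 ^ (m + 2)) / (m + 1)) (-((2 ^ a - 2) / (a * 2 ^ (a - 1)))) := by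
  have hm : padicNorm p ((m + 1 : ℕ) : ℚ) = 1 := padicNorm_natCast_eq_one (by omega) (by omega)
  have hd : padicNorm p ((a * 2 ^ (a - 1) : ℕ) : ℚ) = 1 := by
    refine (padicNorm.nat_eq_one_iff _).2 fun h => ?_
    rcases (Nat.Prime.dvd_mul hp.out).1 h with h | h
    · exact absurd (Nat.le_of_dvd ha h) (by omega)
    · exact hp2 ((Nat.prime_dvd_prime_iff_eq hp.out Nat.prime_two).1 (hp.out.dvd_of_dvd_pow h))
  push_cast at hm hd
  rw [← neg_div]
  refine Rcong.div_of_mul hm hd ?_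
  have hz : (2 - 2 ^ (m + 2)) * (a * 2 ^ (a - 1) : ℤ) ≡ -(2 ^ a - 2) * (m + 1)
      [ZMOD p ^ 1] := by
    rw [pow_one, ← ZMod.intCast_eq_intCast_iff]
    push_cast
    have hsum : (m : ZMod p) + 1 = -a := by
      rw [eq_neg_iff_add_eq_zero]
      exact_mod_cast (ZMod.natCast_eq_zero_iff _ _).2 (by rw [hmap])
    have hfermat : (2 : ZMod p) ^ (m + 2) * 2 ^ (a - 1) = 2 := by
      rw [← pow_add, show m + 2 + (a - 1) = p by omega, ZMod.pow_card]
    have hpow : (2 : ZMod p) * 2 ^ (a - 1) = 2 ^ a := by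
      rw [← _root_.pow_succ', Nat.sub_add_cancel ha]
    linear_combination ((2 : ZMod p) ^ a - 2) * hsum + (a : ZMod p) * hpow - (a : ZMod p) * hfermat
  exact_mod_cast rcong_intCast_iff.2 hz

end Congruences

theorem stmt_6 (a : ℕ) (ha : 1 < a) (p : ℕ) (hp : p.Prime) (hpa : a + 1 < p) :
    Rcong p 1 (H [-(a : ℤ)] (p - 1))
      (-((2 ^ a - 2) / (a * 2 ^ (a - 1))) * bernoulli (p - a)) := by
  have : Fact p.Prime := ⟨hp⟩
  obtain ⟨t, hpt⟩ : Odd p := hp.odd_of_ne_two (by omega)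
  obtain ⟨m, hmap⟩ : ∃ m, m + 1 + a = p := ⟨p - 1 - a, by omega⟩
  have hA := sum_Icc_neg_one_pow_mul_pow (m := m) (by omega) t
  rw [H_singleton_neg (by omega), show p - a = m + 1 by omega]
  refine (rcong_sum_neg_one_pow_div_pow (m := m) (by omega) (by omega)).trans ?_
  rw [show p - 1 = 2 * t by omega, hA, ← hpt]
  refine ((rcong_two_pow_mul_sum_range_pow hpt (by omega)).sub
    (rcong_sum_range_pow_zero (by omega))).trans ?_
  rw [sub_zero]
  exact (rcong_two_sub_two_pow_div (by omega) (by omega) hmap).mul_right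
    (padicNorm_bernoulli_le_one (by omega))
end

section
/- For any prime p > 3, the congruence H(−1, 1, −1; p−1) ≡ 0 (mod p) holds. -/
open Finset

/-!
The reflection `k ↦ p - k` maps strictly increasing triples in `[1, p - 1]` to strictly
increasing triples (in reverse order). It keeps the sign `(-1)^(k₁ + k₃)` of the summand
`(-1)^(k₁ + k₃) / (k₁ k₂ k₃)` of `H(-1, 1, -1; p - 1)`, while
`(p - k₁)(p - k₂)(p - k₃) ≡ -k₁ k₂ k₃ (mod p)`; so a summand and its reflection add up to
a multiple of `p`. Summing over all triples, `2 H ≡ 0`, hence `H ≡ 0` as `p` is odd.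
-/

def increasingTriples (n : ℕ) : Finset (ℕ × ℕ × ℕ) :=
  (Icc 1 n ×ˢ Icc 1 n ×ˢ Icc 1 n).filter fun t => t.1 < t.2.1 ∧ t.2.1 < t.2.2

@[simp]
lemma mem_increasingTriples {n a b c : ℕ} :
    (a, b, c) ∈ increasingTriples n ↔ 1 ≤ a ∧ a < b ∧ b < c ∧ c ≤ n := by
  simp only [increasingTriples, mem_filter, mem_product, mem_Icc]
  omega

lemma Icc_succ_eq_filter (a n : ℕ) : Icc (a + 1) n = (Icc 1 n).filter (a < ·) := by
  ext k
  simp only [mem_Icc, mem_filter]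
  omega

lemma sum_increasingTriples {M : Type*} [CommSemiring M] (n : ℕ) (f g h : ℕ → M) :
    ∑ t ∈ increasingTriples n, f t.1 * (g t.2.1 * h t.2.2)
      = ∑ a ∈ Icc 1 n, f a * ∑ b ∈ Icc (a + 1) n, g b * ∑ c ∈ Icc (b + 1) n, h c := by
  rw [increasingTriples, sum_filter, sum_product]
  refine sum_congr rfl fun a _ => ?_
  rw [sum_product, Icc_succ_eq_filter a, sum_filter, mul_sum]
  refine sum_congr rfl fun b _ => ?_
  rw [Icc_succ_eq_filter b, sum_filter]
  by_cases hab : a < b <;> simp [hab, mul_sum]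

def reflectTriple (m : ℕ) (t : ℕ × ℕ × ℕ) : ℕ × ℕ × ℕ := (m - t.2.2, m - t.2.1, m - t.1)

lemma sum_reflectTriple {M : Type*} [AddCommMonoid M] (m : ℕ) (f : ℕ × ℕ × ℕ → M) :
    ∑ t ∈ increasingTriples (m - 1), f (reflectTriple m t)
      = ∑ t ∈ increasingTriples (m - 1), f t := by
  have maps : ∀ t ∈ increasingTriples (m - 1), reflectTriple m t ∈ increasingTriples (m - 1) := by
    rintro ⟨a, b, c⟩ ht
    simp only [mem_increasingTriples, reflectTriple] at ht ⊢
    omega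
  have invol : ∀ t ∈ increasingTriples (m - 1), reflectTriple m (reflectTriple m t) = t := by
    rintro ⟨a, b, c⟩ ht
    simp only [mem_increasingTriples, reflectTriple, Prod.mk.injEq] at ht ⊢
    omega
  exact sum_nbij' (reflectTriple m) (reflectTriple m) maps maps invol invol fun _ _ => rfl

lemma padicNorm_inv_add_inv_le {p : ℕ} [Fact p.Prime] {x y : ℤ} (hx : ¬ (p : ℤ) ∣ x)
    (hy : ¬ (p : ℤ) ∣ y) (hxy : (p : ℤ) ∣ x + y) :
    padicNorm p ((x : ℚ)⁻¹ + (y : ℚ)⁻¹) ≤ (p : ℚ)⁻¹ := by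
  obtain ⟨z, hz⟩ := hxy
  have hx0 : (x : ℚ) ≠ 0 := Int.cast_ne_zero.mpr fun h => hx (h ▸ dvd_zero _)
  have hy0 : (y : ℚ) ≠ 0 := Int.cast_ne_zero.mpr fun h => hy (h ▸ dvd_zero _)
  have hsum : (x : ℚ)⁻¹ + (y : ℚ)⁻¹ = p * z / (x * y : ℤ) := by
    rw [inv_add_inv hx0 hy0, ← Int.cast_add, hz]
    push_cast
    ring
  have hxy : padicNorm p ((x * y : ℤ) : ℚ) = 1 :=
    (padicNorm.int_eq_one_iff _).mpr <|
      (Nat.prime_iff_prime_int.mp Fact.out).dvd_mul.not.mpr (not_or.mpr ⟨hx, hy⟩)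
  rw [hsum, padicNorm.div, padicNorm.mul, hxy, div_one, padicNorm.padicNorm_p_of_prime]
  exact mul_le_of_le_one_right (by positivity) (padicNorm.of_int z)

def altTripleTerm (t : ℕ × ℕ × ℕ) : ℚ := (-1) ^ (t.1 + t.2.2) / (t.1 * t.2.1 * t.2.2)

lemma H_neg_one_one_neg_one (n : ℕ) :
    H [-1, 1, -1] n = ∑ t ∈ increasingTriples n, altTripleTerm t := by
  calc H [-1, 1, -1] n
      = ∑ a ∈ Icc 1 n, (-1 : ℚ) ^ a / a * ∑ b ∈ Icc (a + 1) n, (b : ℚ)⁻¹ *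
          ∑ c ∈ Icc (b + 1) n, (-1 : ℚ) ^ c / c := by simp [H, Haux]
    _ = ∑ t ∈ increasingTriples n, (-1) ^ t.1 / t.1 * ((t.2.1 : ℚ)⁻¹ * ((-1) ^ t.2.2 / t.2.2)) :=
      (sum_increasingTriples n (fun k => (-1 : ℚ) ^ k / k) (fun k => (k : ℚ)⁻¹) _).symm
    _ = ∑ t ∈ increasingTriples n, altTripleTerm t :=
      sum_congr rfl fun t _ => by rw [altTripleTerm, pow_add]; ring

lemma padicNorm_altTripleTerm_add_reflect_le {p : ℕ} [hp : Fact p.Prime] {t : ℕ × ℕ × ℕ}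
    (ht : t ∈ increasingTriples (p - 1)) :
    padicNorm p (altTripleTerm t + altTripleTerm (reflectTriple p t)) ≤ (p : ℚ)⁻¹ := by
  obtain ⟨a, b, c⟩ := t
  rw [mem_increasingTriples] at ht
  have hsign : (-1 : ℚ) ^ ((p - c) + (p - a)) = (-1) ^ (a + c) := by
    rw [neg_one_pow_eq_pow_mod_two, neg_one_pow_eq_pow_mod_two (n := a + c)]
    congr 1
    omega
  have hpZ : Prime (p : ℤ) := Nat.prime_iff_prime_int.mp hp.out
  have hcoprime : ∀ k, 1 ≤ k → k < p → ¬ (p : ℤ) ∣ k := fun k hk1 hk2 =>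
    Int.natCast_dvd_natCast.not.mpr (Nat.not_dvd_of_pos_of_lt hk1 hk2)
  have hcoprime_sub : ∀ k, 1 ≤ k → k < p → ¬ (p : ℤ) ∣ p - k := fun k hk1 hk2 =>
    (dvd_sub_right dvd_rfl).not.mpr (hcoprime k hk1 hk2)
  have hx : ¬ (p : ℤ) ∣ a * b * c := by
    simp only [hpZ.dvd_mul, not_or]
    exact ⟨⟨hcoprime a (by omega) (by omega), hcoprime b (by omega) (by omega)⟩,
      hcoprime c (by omega) (by omega)⟩
  have hy : ¬ (p : ℤ) ∣ (p - c) * (p - b) * (p - a) := by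
    simp only [hpZ.dvd_mul, not_or]
    exact ⟨⟨hcoprime_sub c (by omega) (by omega), hcoprime_sub b (by omega) (by omega)⟩,
      hcoprime_sub a (by omega) (by omega)⟩
  -- `(p - a)(p - b)(p - c) ≡ -abc`, as an odd number of factors changes sign
  have hxy : (p : ℤ) ∣ a * b * c + (p - c) * (p - b) * (p - a) :=
    ⟨p ^ 2 - p * (a + b + c) + (a * b + b * c + c * a), by ring⟩
  have hterms : altTripleTerm (a, b, c) + altTripleTerm (reflectTriple p (a, b, c)) =
      (-1) ^ (a + c) *
        (((a * b * c : ℤ) : ℚ)⁻¹ + (((p - c) * (p - b) * (p - a) : ℤ) : ℚ)⁻¹) := by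
    simp only [altTripleTerm, reflectTriple, hsign]
    push_cast [Nat.cast_sub (by omega : a ≤ p), Nat.cast_sub (by omega : b ≤ p),
      Nat.cast_sub (by omega : c ≤ p)]
    ring
  rw [hterms, padicNorm.mul, IsAbsoluteValue.abv_pow (padicNorm p), padicNorm.neg,
    padicNorm.one, one_pow, one_mul]
  exact padicNorm_inv_add_inv_le hx hy hxy

theorem stmt_11 (p : ℕ) (hp : p.Prime) (hp3 : 3 < p) :
    Rcong p 1 (H [-1, 1, -1] (p - 1)) 0 := by
  have : Fact p.Prime := ⟨hp⟩
  have htwice : 2 * H [-1, 1, -1] (p - 1) = ∑ t ∈ increasingTriples (p - 1),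
      (altTripleTerm t + altTripleTerm (reflectTriple p t)) := by
    rw [sum_add_distrib, sum_reflectTriple, H_neg_one_one_neg_one, two_mul]
  have htwo : padicNorm p 2 = 1 := by
    exact_mod_cast (padicNorm.nat_eq_one_iff 2).mpr (Nat.not_dvd_of_pos_of_lt two_pos (by omega))
  rw [Rcong, sub_zero, Nat.cast_one, zpow_neg_one]
  calc padicNorm p (H [-1, 1, -1] (p - 1))
      = padicNorm p (2 * H [-1, 1, -1] (p - 1)) := by rw [padicNorm.mul, htwo, one_mul]
    _ ≤ (p : ℚ)⁻¹ := by
      rw [htwice]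
      exact padicNorm.sum_le' (fun _ ht => padicNorm_altTripleTerm_add_reflect_le ht)
        (by positivity)
end

section
/- Let n ≥ d > 0 be integers. Then the polynomial identity d · Σ_{k=1}^{n} C(2k, k+d) · x^{n−k}/k = Σ_{k=0}^{n−d} C(2n, n+d+k) · v_k − C(2n, n+d) holds in ℚ[x], where the polynomials v_k ∈ ℤ[x] are defined by v_0 = 2, v_1 = x − 2, and v_{k+1} = (x − 2)·v_k − v_{k−1} for k ≥ 1. -/
/-!
Writing `x - 2 = t + t⁻¹`, one has `v_j = t^j + t^{-j}` and `x = (1 + t)(1 + t⁻¹)`, so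
`x v_{j+1} = v_{j+2} + 2 v_{j+1} + v_j`: multiplying `Σ a_j v_j` (the term `a_0 v_0` counted half,
which is what subtracting `C(2n, n+d)` does) by `x` applies Pascal's rule twice to the
coefficients. Hence, with `a_j = C(2n, n+d+j)`, the right-hand side for `n + 1` is `x` times the one
for `n` plus a constant, and that constant, `C(2n, n+d-1) - C(2n, n+d+1)`, equals the new term
`d C(2n+2, n+1+d)/(n+1)` of the left-hand side, which obeys the same Horner recursion.
-/

open Finset Polynomial

/-- The polynomials `v₀ = 2`, `v₁ = x - 2`, `v_{k+2} = (x - 2)·v_{k+1} - v_k` in `ℤ[x]`. -/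
noncomputable def v : ℕ → Polynomial ℤ
  | 0 => 2
  | 1 => X - 2
  | (k + 2) => (X - 2) * v (k + 1) - v k

section ThreeTermRecurrence

variable {A : Type*} [CommRing A] {x : A} {u : ℕ → A}

theorem mul_sum_range_of_recurrence
    (hu : ∀ j, x * u (j + 1) = u (j + 2) + 2 * u (j + 1) + u j) (a : ℕ → A) (N : ℕ) :
    x * ∑ j ∈ range N, a (j + 1) * u (j + 1) =
      ∑ j ∈ range N, (a j + 2 * a (j + 1) + a (j + 2)) * u (j + 1) +
        (a 1 * u 0 - a 0 * u 1) + (a N * u (N + 1) - a (N + 1) * u N) := by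
  induction N with
  | zero => simp only [range_zero, sum_empty, mul_zero, zero_add]; ring
  | succ N ih =>
    rw [sum_range_succ, sum_range_succ, mul_add, ih]
    linear_combination a (N + 1) * hu N

theorem mul_add_sum_range_of_recurrence
    (hu : ∀ j, x * u (j + 1) = u (j + 2) + 2 * u (j + 1) + u j) (hu₀ : u 0 = 2)
    (hu₁ : u 1 = x - 2) {a : ℕ → A} {m : ℕ} (ha : ∀ j, m < j → a j = 0) :
    x * (a 0 + ∑ j ∈ range m, a (j + 1) * u (j + 1)) =
      2 * a 0 + 2 * a 1 +
        ∑ j ∈ range (m + 1), (a j + 2 * a (j + 1) + a (j + 2)) * u (j + 1) := by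
  have h := mul_sum_range_of_recurrence hu a (m + 1)
  rw [sum_range_succ (fun j ↦ a (j + 1) * u (j + 1)), ha (m + 1) (by omega),
    ha (m + 2) (by omega), hu₀, hu₁] at h
  linear_combination h

end ThreeTermRecurrence

theorem X_mul_v_succ (k : ℕ) : X * v (k + 1) = v (k + 2) + 2 * v (k + 1) + v k := by
  rw [v]; ring

theorem sum_Icc_mul_pow_sub_succ {A : Type*} [CommSemiring A] (f : ℕ → A) (x : A) (n : ℕ) :
    ∑ k ∈ Icc 1 (n + 1), f k * x ^ (n + 1 - k) =
      x * ∑ k ∈ Icc 1 n, f k * x ^ (n - k) + f (n + 1) := by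
  rw [sum_Icc_succ_top (by omega), Nat.sub_self, pow_zero, mul_one, mul_sum]
  congr 1
  refine sum_congr rfl fun k hk ↦ ?_
  rw [Nat.sub_add_comm (mem_Icc.1 hk).2, pow_succ]
  ring

theorem choose_add_two_add_two (m k : ℕ) :
    (m + 2).choose (k + 2) = m.choose k + 2 * m.choose (k + 1) + m.choose (k + 2) := by
  rw [Nat.choose_succ_succ (m + 1), Nat.choose_succ_succ m, Nat.choose_succ_succ m]
  ring

theorem natCast_mul_choose_two_mul_succ_div (n d : ℕ) (hdn : d ≤ n + 1) :
    (d : ℚ) * ((2 * (n + 1)).choose (n + 1 + d) / (n + 1 : ℕ)) =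
      (2 * (n + 1)).choose (n + 1 + d) - 2 * (2 * n).choose (n + d) -
        2 * (2 * n).choose (n + d + 1) := by
  have hP : (2 * (n + 1)).choose (n + 1 + d) =
      (2 * n + 1).choose (n + d) + (2 * n + 1).choose (n + d + 1) := by
    rw [show 2 * (n + 1) = 2 * n + 1 + 1 by ring, show n + 1 + d = n + d + 1 by ring,
      Nat.choose_succ_succ]
  have hQ : ((2 * n + 1).choose (n + d + 1) : ℚ) =
      (2 * n).choose (n + d) + (2 * n).choose (n + d + 1) := by
    exact_mod_cast Nat.choose_succ_succ (2 * n) (n + d)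
  have hratio := Nat.choose_succ_right_eq (2 * n + 1) (n + d)
  rw [show 2 * n + 1 - (n + d) = n + 1 - d by omega] at hratio
  have hratio' : ((2 * n + 1).choose (n + d + 1) : ℚ) * (n + d + 1) =
      (2 * n + 1).choose (n + d) * (n + 1 - d) := by
    exact_mod_cast hratio
  rw [hP]
  field_simp
  push_cast
  linear_combination hratio' - 2 * (n + 1 : ℚ) * hQ

theorem sum_choose_mul_map_v_succ (n d : ℕ) (hdn : d ≤ n) :
    ∑ k ∈ range (n + 1 - d + 1),
        C ((2 * (n + 1)).choose (n + 1 + d + k) : ℚ) * (v k).map (Int.castRingHom ℚ) -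
      C ((2 * (n + 1)).choose (n + 1 + d) : ℚ) =
    X * (∑ k ∈ range (n - d + 1),
          C ((2 * n).choose (n + d + k) : ℚ) * (v k).map (Int.castRingHom ℚ) -
        C ((2 * n).choose (n + d) : ℚ)) +
      C ((2 * (n + 1)).choose (n + 1 + d) - 2 * (2 * n).choose (n + d) -
        2 * (2 * n).choose (n + d + 1) : ℚ) := by
  have hu₀ : (v 0).map (Int.castRingHom ℚ) = 2 := by simp [v]
  have hu₁ : (v 1).map (Int.castRingHom ℚ) = X - 2 := by simp [v]
  have hu (j : ℕ) : X * (v (j + 1)).map (Int.castRingHom ℚ) =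
      (v (j + 2)).map (Int.castRingHom ℚ) + 2 * (v (j + 1)).map (Int.castRingHom ℚ) +
        (v j).map (Int.castRingHom ℚ) := by
    simpa using congrArg (map (Int.castRingHom ℚ)) (X_mul_v_succ j)
  have hvanish (j : ℕ) (hj : n - d < j) : C ((2 * n).choose (n + d + j) : ℚ) = 0 := by
    rw [Nat.choose_eq_zero_of_lt (by omega), Nat.cast_zero, C_0]
  have hpascal (j : ℕ) :
      C ((2 * n).choose (n + d + j) : ℚ) + 2 * C ((2 * n).choose (n + d + (j + 1)) : ℚ) +
          C ((2 * n).choose (n + d + (j + 2)) : ℚ) =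
        C ((2 * (n + 1)).choose (n + 1 + d + (j + 1)) : ℚ) := by
    rw [show 2 * (n + 1) = 2 * n + 2 by ring, show n + 1 + d + (j + 1) = n + d + j + 2 by ring,
      choose_add_two_add_two]
    simp only [Nat.cast_add, Nat.cast_mul, map_add, map_mul, Nat.cast_ofNat, map_ofNat, add_assoc]
  have h := mul_add_sum_range_of_recurrence (u := fun k ↦ (v k).map (Int.castRingHom ℚ))
    hu hu₀ hu₁ hvanish
  beta_reduce at h
  simp only [hpascal, add_zero] at h
  rw [show n + 1 - d = n - d + 1 by omega, sum_range_succ' _ (n - d),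
    sum_range_succ' _ (n - d + 1)]
  simp only [add_zero, hu₀, map_sub, map_mul, map_ofNat]
  simp only [← add_assoc] at h ⊢
  linear_combination -h

theorem stmt_16 (n d : ℕ) (hd : 0 < d) (hdn : d ≤ n) :
    (Polynomial.C (d : ℚ)) *
        ∑ k ∈ Finset.Icc 1 n,
          Polynomial.C ((Nat.choose (2 * k) (k + d) : ℚ) / k) * Polynomial.X ^ (n - k) =
      ∑ k ∈ Finset.range (n - d + 1),
          Polynomial.C (Nat.choose (2 * n) (n + d + k) : ℚ) * (v k).map (Int.castRingHom ℚ) -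
        Polynomial.C (Nat.choose (2 * n) (n + d) : ℚ) := by
  induction n, hdn using Nat.le_induction with
  | base =>
    have hd' : (d : ℚ) ≠ 0 := by exact_mod_cast hd.ne'
    rw [Nat.sub_self, zero_add, sum_range_one,
      sum_eq_single_of_mem d (mem_Icc.2 ⟨hd, le_rfl⟩)]
    · simp only [← two_mul, add_zero, Nat.choose_self, Nat.sub_self, pow_zero, mul_one,
        ← C_mul, Nat.cast_one, one_div, mul_inv_cancel₀ hd', v]
      norm_num
    · intro k hk hkd
      rw [Nat.choose_eq_zero_of_lt (by grind)]
      simp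
  | succ n hdn ih =>
    rw [sum_Icc_mul_pow_sub_succ, mul_add, mul_left_comm, ih, ← C_mul,
      natCast_mul_choose_two_mul_succ_div n d (by omega), sum_choose_mul_map_v_succ n d hdn]
end

section
/- For any integer n > 0, the identity 4^n · Σ_{k=1}^{n} (C(2k, k)/4^k) · (1/k) = −4·(−1)^n · Σ_{d=0}^{n−1} ((−1)^d/(n−d)) · Σ_{j=0}^{d−1} C(2n, j) − 2·(−1)^n · Σ_{d=0}^{n−1} ((−1)^d/(n−d)) · C(2n, d) holds in ℚ. (Here C(2k, k)/4^k = (−1)^k · C(−1/2, k), so the left-hand side equals 4^n · Σ_{k=1}^{n} ((−1)^k/k) · C(−1/2, k).) -/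
/-!
Both sides vanish at `n = 0` and satisfy `f (n + 1) = 4 f n + C(2n+2, n+1) / (n+1)`, which is
immediate for the left side. On the right, Pascal's rule merges the two inner sums into the
partial sums `S d = ∑_{j ≤ d} C(2n+1, j)`. Passing from row `2n+1` to row `2n+3` multiplies these
by `4` up to the correction `C(2n+1, d+1) - C(2n+1, d) = (n-d)/(n+1) · C(2n+2, d+1)`, whose factor
`n - d` cancels the weight `1/(n-d)`; what is left is a truncated alternating sum of row `2n+2`,
which equals `±C(2n+1, n)`.
-/

open Finset

theorem Nat.sum_range_succ_choose_succ (N d : ℕ) :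
    ∑ j ∈ range (d + 1), (N + 1).choose j =
      ∑ j ∈ range d, N.choose j + ∑ j ∈ range (d + 1), N.choose j := by
  simp only [sum_range_succ' _ d, choose_succ_succ, sum_add_distrib, choose_zero_right]
  ring

theorem sum_range_choose_add_two (N d : ℕ) :
    ∑ j ∈ range (d + 2), ((N + 2).choose j : ℤ) =
      4 * ∑ j ∈ range (d + 1), (N.choose j : ℤ) + N.choose (d + 1) - N.choose d := by
  have pascal (M k : ℕ) := congrArg (Nat.cast (R := ℤ)) (Nat.sum_range_succ_choose_succ M k)
  push_cast at pascal
  rw [pascal, pascal, pascal, sum_range_succ _ (d + 1), sum_range_succ _ d]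
  ring

theorem add_one_mul_choose_succ_sub_choose {N e : ℕ} (he : e ≤ N) :
    ((N : ℤ) + 1) * (N.choose (e + 1) - N.choose e) =
      ((N : ℤ) - 2 * e - 1) * (N + 1).choose (e + 1) := by
  have h₁ := congrArg (Nat.cast (R := ℤ)) (Nat.add_one_mul_choose_eq N e)
  have h₂ := congrArg (Nat.cast (R := ℤ)) (Nat.choose_mul_succ_eq N (e + 1))
  rw [Nat.add_sub_add_right] at h₂
  push_cast [Nat.cast_sub he] at h₁ h₂
  linear_combination h₂ - h₁

theorem Nat.choose_two_mul_add_two_succ (n : ℕ) :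
    (2 * n + 2).choose (n + 1) = 2 * (2 * n + 1).choose n := by
  rw [choose_succ_succ, choose_symm_half]
  ring

theorem sum_range_neg_one_pow_mul_choose_succ (N m : ℕ) :
    ∑ e ∈ range m, (-1) ^ e * ((N + 1).choose (e + 1) : ℤ) = 1 - (-1) ^ m * N.choose m := by
  have h := Int.alternating_sum_range_choose_eq_choose (n := N) (m := m)
  simp only [sum_range_succ', pow_succ, mul_neg_one, neg_mul, sum_neg_distrib, pow_zero,
    Nat.choose_zero_right, Nat.cast_one, mul_one] at h
  linarith

def centralBinomHarmonicSum (n : ℕ) : ℚ :=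
  4 ^ n * ∑ k ∈ Icc 1 n, ((2 * k).choose k : ℚ) / 4 ^ k * (1 / k)

theorem centralBinomHarmonicSum_succ (n : ℕ) :
    centralBinomHarmonicSum (n + 1) =
      4 * centralBinomHarmonicSum n + ((2 * n + 2).choose (n + 1) : ℚ) / (n + 1) := by
  rw [centralBinomHarmonicSum, centralBinomHarmonicSum, sum_Icc_succ_top (by omega), mul_add]
  congr 1
  · ring
  · rw [Nat.mul_add_one]
    push_cast
    field_simp

def alternatingBinomSum (n : ℕ) : ℚ :=
  -2 * (-1) ^ n * ∑ d ∈ range n,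
    (-1) ^ d / ((n : ℚ) - d) * ∑ j ∈ range (d + 1), ((2 * n + 1).choose j : ℚ)

theorem alternatingBinomSum_succ (n : ℕ) :
    alternatingBinomSum (n + 1) =
      4 * alternatingBinomSum n + ((2 * n + 2).choose (n + 1) : ℚ) / (n + 1) := by
  have hn : (n : ℚ) + 1 ≠ 0 := by positivity
  have shifted_term (e : ℕ) (he : e < n) :
      (-1) ^ (e + 1) / (((n + 1 : ℕ) : ℚ) - (e + 1 : ℕ)) *
          ∑ j ∈ range (e + 1 + 1), ((2 * (n + 1) + 1).choose j : ℚ) =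
        -4 * ((-1) ^ e / ((n : ℚ) - e) * ∑ j ∈ range (e + 1), ((2 * n + 1).choose j : ℚ)) -
          (-1) ^ e * (((2 * n + 2).choose (e + 1) : ℚ) / (n + 1)) := by
    have he' : (n : ℚ) - e ≠ 0 := sub_ne_zero.mpr (by exact_mod_cast he.ne')
    have hsum := congrArg (Int.cast (R := ℚ)) (sum_range_choose_add_two (2 * n + 1) e)
    have hdiff := congrArg (Int.cast (R := ℚ))
      (add_one_mul_choose_succ_sub_choose (N := 2 * n + 1) (e := e) (by omega))
    push_cast at hsum hdiff
    have hratio : (((2 * n + 1).choose (e + 1) : ℚ) - (2 * n + 1).choose e) / (n - e) =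
        (2 * n + 2).choose (e + 1) / (n + 1) := by
      rw [div_eq_div_iff he' hn]
      linear_combination hdiff / 2
    rw [show 2 * (n + 1) + 1 = 2 * n + 1 + 2 by ring, hsum, ← hratio,
      show ((n + 1 : ℕ) : ℚ) - (e + 1 : ℕ) = n - e by push_cast; ring]
    ring
  have halternating :=
    congrArg (Int.cast (R := ℚ)) (sum_range_neg_one_pow_mul_choose_succ (2 * n + 1) n)
  push_cast at halternating
  rw [alternatingBinomSum, alternatingBinomSum, sum_range_succ',
    sum_congr rfl fun e he => shifted_term e (mem_range.mp he)]
  simp only [sum_sub_distrib, ← mul_sum, ← mul_div_assoc, ← sum_div, halternating, zero_add,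
    sum_range_one, pow_zero, Nat.choose_zero_right, Nat.cast_zero, sub_zero, Nat.cast_one,
    Nat.choose_two_mul_add_two_succ]
  have hsq : (-1 : ℚ) ^ n * (-1) ^ n = 1 := by rw [← mul_pow, neg_one_mul, neg_neg, one_pow]
  push_cast
  field_simp
  linear_combination ((2 * n + 1).choose n : ℚ) * hsq

theorem centralBinomHarmonicSum_eq_alternatingBinomSum (n : ℕ) :
    centralBinomHarmonicSum n = alternatingBinomSum n := by
  induction n with
  | zero => simp [centralBinomHarmonicSum, alternatingBinomSum]
  | succ n ih => rw [centralBinomHarmonicSum_succ, alternatingBinomSum_succ, ih]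

theorem alternatingBinomSum_eq (n : ℕ) :
    alternatingBinomSum n =
      -4 * (-1 : ℚ) ^ n * ∑ d ∈ range n,
          ((-1 : ℚ) ^ d / ((n : ℚ) - d)) * ∑ j ∈ range d, ((2 * n).choose j : ℚ) -
        2 * (-1 : ℚ) ^ n * ∑ d ∈ range n,
          ((-1 : ℚ) ^ d / ((n : ℚ) - d)) * ((2 * n).choose d : ℚ) := by
  have hpascal (d : ℕ) : ∑ j ∈ range (d + 1), ((2 * n + 1).choose j : ℚ) =
      2 * ∑ j ∈ range d, ((2 * n).choose j : ℚ) + (2 * n).choose d := by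
    rw_mod_cast [Nat.sum_range_succ_choose_succ, sum_range_succ]
    ring
  simp only [alternatingBinomSum, hpascal, mul_sum (range n), ← sum_sub_distrib]
  exact sum_congr rfl fun d _ => by ring

theorem stmt_17_general (n : ℕ) :
    (4 : ℚ) ^ n * ∑ k ∈ Finset.Icc 1 n, ((Nat.choose (2 * k) k : ℚ) / 4 ^ k) * (1 / k) =
      -4 * (-1 : ℚ) ^ n * ∑ d ∈ Finset.range n,
          ((-1 : ℚ) ^ d / ((n : ℚ) - d)) * ∑ j ∈ Finset.range d, (Nat.choose (2 * n) j : ℚ) -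
        2 * (-1 : ℚ) ^ n * ∑ d ∈ Finset.range n,
          ((-1 : ℚ) ^ d / ((n : ℚ) - d)) * (Nat.choose (2 * n) d : ℚ) :=
  (centralBinomHarmonicSum_eq_alternatingBinomSum n).trans (alternatingBinomSum_eq n)

theorem stmt_17 (n : ℕ) (hn : 0 < n) :
    (4 : ℚ) ^ n * ∑ k ∈ Finset.Icc 1 n, ((Nat.choose (2 * k) k : ℚ) / 4 ^ k) * (1 / k) =
      -4 * (-1 : ℚ) ^ n * ∑ d ∈ Finset.range n,
          ((-1 : ℚ) ^ d / ((n : ℚ) - d)) * ∑ j ∈ Finset.range d, (Nat.choose (2 * n) j : ℚ) -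
        2 * (-1 : ℚ) ^ n * ∑ d ∈ Finset.range n,
          ((-1 : ℚ) ^ d / ((n : ℚ) - d)) * (Nat.choose (2 * n) d : ℚ) :=
  stmt_17_general n
end

section
/- For any odd prime p and any integer j with 0 < j < p, the congruence C(2p, j) ≡ −2p·(−1)^j/j + 4p²·((−1)^j/j)·H(1; j−1) (mod p³) holds, where H(1; j−1) = Σ_{i=1}^{j−1} 1/i. -/
open Finset

/-!
Write `C(2p, j) = (2p/j) ∏_{i<j} (2p - i)/i`. Expanding the product to first order in `t = 2p`
gives `(-1)^(j-1) (1 - t H(1; j-1))` up to an error of size `t²`, since every `1/i` with `i < p`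
is a `p`-adic unit; the prefactor `2p/j` contributes one more factor of `p`.
-/

section

variable {K : Type*} [Field K] [CharZero K]

theorem cast_choose_eq_prod_Icc (n m : ℕ) :
    (n.choose m : K) = ∏ i ∈ Icc 1 m, ((n : K) + 1 - i) / i := by
  induction m with
  | zero => simp
  | succ m ih =>
    have hrec : (n.choose (m + 1) : K) * (m + 1) = n.choose m * ((n : K) - m) := by
      rcases le_or_gt m n with hmn | hnm
      · have h := congrArg (Nat.cast : ℕ → K) (Nat.choose_succ_right_eq n m)
        push_cast [Nat.cast_sub hmn] at h
        exact h
      · simp [Nat.choose_eq_zero_of_lt hnm, Nat.choose_eq_zero_of_lt (hnm.trans m.lt_succ_self)]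
    rw [prod_Icc_succ_top (by omega), ← ih]
    push_cast
    field_simp
    linear_combination hrec

theorem cast_choose_succ_eq_mul_prod_Icc (n m : ℕ) :
    (n.choose (m + 1) : K) = n / (m + 1) * ∏ i ∈ Icc 1 m, ((n : K) - i) / i := by
  cases n with
  | zero => simp
  | succ n =>
    rw [div_mul_eq_mul_div, eq_div_iff (Nat.cast_add_one_ne_zero m), Nat.cast_succ, ← cast_choose_eq_prod_Icc]
    exact_mod_cast (Nat.add_one_mul_choose_eq n m).symm

end

section

variable {p : ℕ} [Fact p.Prime]

theorem padicNorm_natCast_eq_one_of_lt {m : ℕ} (h0 : 0 < m) (h1 : m < p) :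
    padicNorm p (m : ℚ) = 1 :=
  (padicNorm.nat_eq_one_iff m).2 (Nat.not_dvd_of_pos_of_lt h0 h1)

theorem padicNorm_sum_Icc_one_div_le_one {m : ℕ} (h : m < p) :
    padicNorm p (∑ i ∈ Icc 1 m, (1 : ℚ) / i) ≤ 1 := by
  refine padicNorm.sum_le' (fun i hi => ?_) zero_le_one
  rw [mem_Icc] at hi
  rw [padicNorm.div, padicNorm.one, padicNorm_natCast_eq_one_of_lt hi.1 (by omega), div_one]

theorem padicNorm_prod_Icc_sub_div_sub_le {t : ℚ} (ht : padicNorm p t ≤ 1) {m : ℕ} (hm : m < p) :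
    padicNorm p (∏ i ∈ Icc 1 m, (t - i) / i
      - (-1) ^ m * (1 - t * ∑ i ∈ Icc 1 m, (1 : ℚ) / i)) ≤ padicNorm p t ^ 2 := by
  induction m with
  | zero => simpa [padicNorm.zero] using sq_nonneg (padicNorm p t)
  | succ m ih =>
    set P := ∏ i ∈ Icc 1 m, (t - i) / i
    set Hm := ∑ i ∈ Icc 1 m, (1 : ℚ) / i
    have hden : padicNorm p ((m : ℚ) + 1) = 1 := by
      exact_mod_cast padicNorm_natCast_eq_one_of_lt m.succ_pos hm
    have hstep : P * ((t - (m + 1)) / (m + 1)) - (-1) ^ (m + 1) * (1 - t * (Hm + 1 / (m + 1)))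
        = (t - (m + 1)) / (m + 1) * (P - (-1) ^ m * (1 - t * Hm))
          + t ^ 2 * ((-1) ^ (m + 1) * Hm / (m + 1)) := by
      field_simp
      ring
    have hfactor : padicNorm p ((t - (m + 1)) / (m + 1)) ≤ 1 := by
      rw [padicNorm.div, hden, div_one]
      exact padicNorm.sub.trans (max_le ht (by exact_mod_cast padicNorm.of_nat (m + 1)))
    have hcorr : padicNorm p ((-1) ^ (m + 1) * Hm / (m + 1)) ≤ 1 := by
      rw [padicNorm.div, padicNorm.mul, hden, div_one]
      exact mul_le_one₀ (by exact_mod_cast padicNorm.of_int ((-1) ^ (m + 1)))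
        (padicNorm.nonneg _) (padicNorm_sum_Icc_one_div_le_one (by omega))
    rw [prod_Icc_succ_top (by omega), sum_Icc_succ_top (by omega)]
    push_cast
    rw [hstep]
    refine padicNorm.nonarchimedean.trans (max_le ?_ ?_) <;> rw [padicNorm.mul]
    · exact (mul_le_mul_of_nonneg_left (ih (by omega)) (padicNorm.nonneg _)).trans
        (mul_le_of_le_one_left (sq_nonneg _) hfactor)
    · rw [sq t, padicNorm.mul, ← sq]
      exact mul_le_of_le_one_right (sq_nonneg _) hcorr

end

theorem stmt_18 (p : ℕ) (hp : p.Prime) (hp2 : p ≠ 2) (j : ℕ) (hj0 : 0 < j) (hjp : j < p) :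
    Rcong p 3 (Nat.choose (2 * p) j : ℚ)
      (-2 * p * ((-1 : ℚ) ^ j / j) +
        4 * p ^ 2 * ((-1 : ℚ) ^ j / j) * ∑ i ∈ Finset.Icc 1 (j - 1), (1 : ℚ) / i) := by
  have : Fact p.Prime := ⟨hp⟩
  obtain ⟨m, rfl⟩ : ∃ m, j = m + 1 := ⟨j - 1, by omega⟩
  have hnorm : padicNorm p (2 * p : ℚ) = (p : ℚ)⁻¹ := by
    rw [padicNorm.mul, padicNorm.padicNorm_p_of_prime, show (2 : ℚ) = (2 : ℕ) by norm_num,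
      padicNorm_natCast_eq_one_of_lt two_pos (by omega : 2 < p), one_mul]
  have hden : padicNorm p ((m : ℚ) + 1) = 1 := by
    exact_mod_cast padicNorm_natCast_eq_one_of_lt m.succ_pos hjp
  have hcong := padicNorm_prod_Icc_sub_div_sub_le
    (hnorm.trans_le (inv_le_one_of_one_le₀ (by exact_mod_cast hp.one_lt.le))) (by omega : m < p)
  rw [hnorm] at hcong
  unfold Rcong
  rw [cast_choose_succ_eq_mul_prod_Icc, Nat.add_sub_cancel]
  push_cast
  set P := ∏ i ∈ Icc 1 m, (2 * p - i : ℚ) / i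
  set Hm := ∑ i ∈ Icc 1 m, (1 : ℚ) / i
  calc _ = padicNorm p (2 * p / (m + 1) * (P - (-1) ^ m * (1 - 2 * p * Hm))) := by
        congr 1
        field_simp
        ring
    _ ≤ (p : ℚ)⁻¹ * (p : ℚ)⁻¹ ^ 2 := by
        rw [padicNorm.mul, padicNorm.div, hnorm, hden, div_one]
        gcongr
    _ = (p : ℚ) ^ (-(3 : ℕ) : ℤ) := by rw [zpow_neg, zpow_natCast]; ring
end
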